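/- Let m₁ ≥ 2 be an integer and let S, H ≥ 0 be real numbers with m₁·S > -H². If q is a real number satisfying (m₁q - 1)² = (m₁-1)·H / (√(m₁(m₁-1)·S + m₁·H²) - H) (assuming the right side is well-defined and positive), and p = q/(m₁q - 1), so that m₁pq - p - q = 0, then (m₁q² - 2q + 1) > 0 and the expression [S/(m₁q²-2q+1) - (m₁p² + 2q - 2m₁pq)·H²/(m₁q²-2q+1)] equals (1/(m₁-1)²)·(√(m₁(m₁-1)·S + m₁H²) - H)². -/

import Mathlib

theorem stmt_0 (m₁ : ℕ) (hm : 2 ≤ m₁) (S H q : ℝ) (hS : 0 ≤ S) (hH : 0 ≤ H)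
    (hpos : (m₁ : ℝ) * S > -H^2)
    (hden : Real.sqrt ((m₁ : ℝ) * (m₁ - 1) * S + m₁ * H^2) - H > 0)
    (hq : ((m₁ : ℝ) * q - 1)^2 =
      ((m₁ : ℝ) - 1) * H / (Real.sqrt ((m₁ : ℝ) * (m₁ - 1) * S + m₁ * H^2) - H))
    (p : ℝ) (hp : p = q / ((m₁ : ℝ) * q - 1)) (hq1 : (m₁ : ℝ) * q ≠ 1) :
    (m₁ : ℝ) * q^2 - 2*q + 1 > 0 ∧
    S / ((m₁ : ℝ) * q^2 - 2*q + 1)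
      - ((m₁ : ℝ) * p^2 + 2*q - 2*m₁*p*q) * H^2 / ((m₁ : ℝ) * q^2 - 2*q + 1)
      = (1 / ((m₁ : ℝ) - 1)^2) *
        (Real.sqrt ((m₁ : ℝ) * (m₁ - 1) * S + m₁ * H^2) - H)^2 := by
  have hm2 : (2:ℝ) ≤ (m₁:ℝ) := by exact_mod_cast hm
  set m : ℝ := (m₁ : ℝ) with hmdef
  set R : ℝ := Real.sqrt (m * (m - 1) * S + m * H^2) with hRdef
  have hArg : 0 ≤ m * (m - 1) * S + m * H^2 := by nlinarith [sq_nonneg H]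
  have hR2 : R^2 = m * (m - 1) * S + m * H^2 := Real.sq_sqrt hArg
  have hqne : m * q - 1 ≠ 0 := sub_ne_zero.mpr hq1
  have hA : (m * q - 1)^2 > 0 := by positivity
  have hkey : (m * q - 1)^2 * (R - H) = (m - 1) * H := by
    rw [hq]; field_simp
  have hHpos : 0 < H := by
    rcases hH.lt_or_eq with h | h
    · exact h
    · exfalso
      have : (m * q - 1)^2 * (R - H) = 0 := by rw [hkey, ← h]; ring
      have := mul_eq_zero.mp this
      rcases this with h1 | h2
      · exact hA.ne' h1
      · exact hden.ne' h2
  have hD : m * q^2 - 2*q + 1 > 0 := by nlinarith [hA]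
  have hAR : (m * q - 1)^2 * R = m * (m * q^2 - 2*q + 1) * H := by nlinarith [hkey]
  have hsq : ((m * q - 1)^2)^2 * ((m - 1) * S + H^2)
      = m * (m * q^2 - 2*q + 1)^2 * H^2 := by
    have hm0 : m ≠ 0 := by nlinarith
    have h1 : ((m*q-1)^2 * R)^2 = (m*(m*q^2-2*q+1)*H)^2 := by rw [hAR]
    have h2 : m * (((m * q - 1)^2)^2 * ((m - 1) * S + H^2))
        = m * (m * (m * q^2 - 2*q + 1)^2 * H^2) := by
      linear_combination (-((m*q-1)^2)^2) * hR2 + h1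
    exact mul_left_cancel₀ hm0 h2
  refine ⟨hD, ?_⟩
  have hRH : R - H = (m - 1) * H / ((m * q - 1)^2) := by
    field_simp
    linarith [hkey]
  rw [hRH, hp]
  have hm1 : m - 1 ≠ 0 := by nlinarith
  have hDne : q * (m * q - 2) + 1 ≠ 0 := by nlinarith
  field_simp
  apply mul_left_cancel₀ hm1
  linear_combination hsq
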